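/- arXiv:1506.05241 — 2 statements merged into one kernel-verified Lean document; each statement's English description precedes it below -/
import Mathlib

section
/- Fix $m_0\in\mathbb{N}$, $\lambda_0>0$, a nonzero polynomial $p(z)=\sum_{j=0}^{\ell_0}\beta_j z^j$, $\varepsilon_0\in(0,1)$, $R_0>1$. Let $f(z)=\sum_{j=0}^{\ell_0}\frac{j!}{(j+m_0)!}\frac{\beta_j}{\lambda_0^{j+m_0}} z^{j+m_0}$, set $N_0=m_0+\ell_0$, $M_0=\max_{0\le j\le \ell_0}|\beta_j|$, $M_1=M_0\sum_{j=0}^{\ell_0} R_0^j$. Then for every $\lambda\in[\lambda_0,\lambda_0(1+\varepsilon_0/M_1)^{1/N_0})$ and every $z$ with $|z|\le R_0$, one has $|\lambda_0^{m_0} f^{(m_0)}(\lambda_0 z)-\lambda^{m_0} f^{(m_0)}(\lambda z)|<\varepsilon_0$. -/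
/-!
Differentiating term by term, `λ ^ m f⁽ᵐ⁾(λ z) = ∑ β j z ^ j (λ / λ₀) ^ (j + m)`, so with
`ρ = λ / λ₀ ≥ 1` the difference is `∑ β j z ^ j (1 - ρ ^ (j + m))`, whose norm is at most
`M₁ (ρ ^ N₀ - 1)`; the upper bound on `λ` is exactly `ρ ^ N₀ < 1 + ε₀ / M₁`.
-/

open Finset

lemma iteratedDeriv_sum_mul_pow_add (m : ℕ) (s : Finset ℕ) (c : ℕ → ℂ) (w : ℂ) :
    iteratedDeriv m (fun z : ℂ => ∑ j ∈ s, c j * z ^ (j + m)) w =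
      ∑ j ∈ s, c j * ((j + m).descFactorial m : ℂ) * w ^ j := by
  rw [iteratedDeriv_fun_sum fun j _ => by fun_prop]
  simp only [iteratedDeriv_const_mul_field, iteratedDeriv_pow, Nat.add_sub_cancel, mul_assoc]

lemma factorial_div_factorial_add_mul_descFactorial (j m : ℕ) :
    (j.factorial : ℂ) / ((j + m).factorial : ℂ) * ((j + m).descFactorial m : ℂ) = 1 := by
  have h := Nat.factorial_mul_descFactorial (Nat.le_add_left m j)
  rw [Nat.add_sub_cancel] at h
  rw [div_mul_eq_mul_div, ← Nat.cast_mul, h,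
    div_self (Nat.cast_ne_zero.2 (Nat.factorial_ne_zero _))]

lemma pow_mul_iteratedDeriv_dilated_antideriv (m : ℕ) (s : Finset ℕ) (β : ℕ → ℂ) {a : ℂ}
    (ha : a ≠ 0) (t z : ℂ) :
    t ^ m * iteratedDeriv m (fun w : ℂ => ∑ j ∈ s,
      ((j.factorial : ℂ) / ((j + m).factorial : ℂ)) * (β j / a ^ (j + m)) * w ^ (j + m)) (t * z) =
      ∑ j ∈ s, β j * z ^ j * (t / a) ^ (j + m) := by
  rw [iteratedDeriv_sum_mul_pow_add, mul_sum]
  refine sum_congr rfl fun j _ => ?_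
  rw [mul_right_comm _ _ ((j + m).descFactorial m : ℂ),
    factorial_div_factorial_add_mul_descFactorial, one_mul, div_pow]
  field_simp
  ring

lemma norm_one_sub_pow_le {ρ : ℝ} (hρ : 1 ≤ ρ) {n N : ℕ} (hn : n ≤ N) :
    ‖(1 : ℂ) - (ρ : ℂ) ^ n‖ ≤ ρ ^ N - 1 := by
  rw [← Complex.ofReal_pow, ← Complex.ofReal_one, ← Complex.ofReal_sub, Complex.norm_real,
    Real.norm_eq_abs, abs_sub_comm, abs_of_nonneg (sub_nonneg.2 (one_le_pow₀ hρ))]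
  linarith [pow_le_pow_right₀ hρ hn]

lemma norm_sum_mul_one_sub_pow_le (s : Finset ℕ) (β : ℕ → ℂ) {M R ρ : ℝ} {z : ℂ} {m N : ℕ}
    (hβ : ∀ j ∈ s, ‖β j‖ ≤ M) (hz : ‖z‖ ≤ R) (hρ : 1 ≤ ρ) (hN : ∀ j ∈ s, j + m ≤ N) :
    ‖∑ j ∈ s, β j * z ^ j * (1 - (ρ : ℂ) ^ (j + m))‖ ≤ M * (∑ j ∈ s, R ^ j) * (ρ ^ N - 1) := by
  rw [mul_sum, sum_mul]
  refine (norm_sum_le _ _).trans (sum_le_sum fun j hj => ?_)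
  rw [norm_mul, norm_mul, norm_pow]
  have hM : 0 ≤ M := (norm_nonneg _).trans (hβ j hj)
  have hR : 0 ≤ R := (norm_nonneg z).trans hz
  gcongr
  exacts [hβ j hj, norm_one_sub_pow_le hρ (hN j hj)]

lemma pow_lt_of_lt_rpow_one_div {x B : ℝ} {N : ℕ} (hx : 1 ≤ x) (hB : 0 ≤ B)
    (h : x < B ^ ((1 : ℝ) / N)) : x ^ N < B := by
  rcases N.eq_zero_or_pos with rfl | hN
  · simp only [Nat.cast_zero, div_zero, Real.rpow_zero] at h
    linarith
  · rwa [one_div, Real.lt_rpow_inv_iff_of_pos (by linarith) hB (by positivity),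
      Real.rpow_natCast] at h

theorem stmt_2 (m₀ : ℕ) (lam₀ : ℝ) (hlam₀ : 0 < lam₀)
    (ℓ₀ : ℕ) (β : ℕ → ℂ)
    (ε₀ : ℝ) (hε₀ : ε₀ ∈ Set.Ioo (0 : ℝ) 1) (R₀ : ℝ)
    (f : ℂ → ℂ)
    (hf : ∀ z : ℂ, f z = ∑ j ∈ range (ℓ₀ + 1),
      ((j.factorial : ℂ) / ((j + m₀).factorial : ℂ)) * (β j / (lam₀ : ℂ) ^ (j + m₀)) * z ^ (j + m₀))
    (N₀ : ℕ) (hN₀ : N₀ = m₀ + ℓ₀)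
    (M₀ : ℝ) (hM₀ : M₀ = (range (ℓ₀ + 1)).sup' (by simp) (fun j => ‖β j‖))
    (M₁ : ℝ) (hM₁ : M₁ = M₀ * ∑ j ∈ range (ℓ₀ + 1), R₀ ^ j)
    (lam : ℝ) (hlam : lam ∈ Set.Ico lam₀ (lam₀ * (1 + ε₀ / M₁) ^ ((1 : ℝ) / N₀)))
    (z : ℂ) (hz : ‖z‖ ≤ R₀) :
    ‖(lam₀ : ℂ) ^ m₀ * iteratedDeriv m₀ f ((lam₀ : ℂ) * z)
      - (lam : ℂ) ^ m₀ * iteratedDeriv m₀ f ((lam : ℂ) * z)‖ < ε₀ := by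
  obtain ⟨hlam_ge, hlam_lt⟩ := hlam
  have hρ : 1 ≤ lam / lam₀ := (one_le_div hlam₀).2 hlam_ge
  have hβ : ∀ j ∈ range (ℓ₀ + 1), ‖β j‖ ≤ M₀ := fun j hj => hM₀ ▸ le_sup' (fun j => ‖β j‖) hj
  have hM₁_nonneg : 0 ≤ M₁ := by
    have hM₀_nonneg : 0 ≤ M₀ := (norm_nonneg _).trans (hβ 0 (by simp))
    have hR₀_nonneg : 0 ≤ R₀ := (norm_nonneg z).trans hz
    rw [hM₁]
    positivity
  have hρN : (lam / lam₀) ^ N₀ < 1 + ε₀ / M₁ :=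
    pow_lt_of_lt_rpow_one_div hρ (by have := hε₀.1; positivity) ((div_lt_iff₀' hlam₀).2 hlam_lt)
  -- `ε₀ / 0 = 0`, so `M₁ = 0` would force `ρ ^ N₀ < 1`
  have hM₁_pos : 0 < M₁ := by
    refine hM₁_nonneg.lt_of_ne fun h => ?_
    rw [← h, div_zero, add_zero] at hρN
    exact hρN.not_ge (one_le_pow₀ hρ)
  have hdiff : (lam₀ : ℂ) ^ m₀ * iteratedDeriv m₀ f ((lam₀ : ℂ) * z)
      - (lam : ℂ) ^ m₀ * iteratedDeriv m₀ f ((lam : ℂ) * z) =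
      ∑ j ∈ range (ℓ₀ + 1), β j * z ^ j * (1 - ((lam / lam₀ : ℝ) : ℂ) ^ (j + m₀)) := by
    have hlam₀' : (lam₀ : ℂ) ≠ 0 := by exact_mod_cast hlam₀.ne'
    simp only [funext hf, pow_mul_iteratedDeriv_dilated_antideriv _ _ _ hlam₀', div_self hlam₀',
      one_pow, Complex.ofReal_div, mul_sub, mul_one, sum_sub_distrib]
  rw [hdiff]
  calc _ ≤ M₀ * (∑ j ∈ range (ℓ₀ + 1), R₀ ^ j) * ((lam / lam₀) ^ N₀ - 1) :=
        norm_sum_mul_one_sub_pow_le _ β hβ hz hρ fun j hj => by rw [mem_range] at hj; omega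
    _ < ε₀ := by
        rw [← hM₁, ← lt_div_iff₀' hM₁_pos]
        linarith
end

section
/- Let $m_{i_0}<m_{j_0}$ be positive integers, $0<\lambda_0<\delta_{j_0}$, $R_0>1$, and $p(z)=\sum_{k=0}^{\ell_0}\beta_k z^k$ with $M_0=\max_k|\beta_k|$. Let $f_{j_0}(z)=\sum_{k=0}^{\ell_0}\frac{k!}{(k+m_{j_0})!}\frac{\beta_k}{\delta_{j_0}^{k+m_{j_0}}} z^{k+m_{j_0}}$. Assume $M_0\,\ell_0!\,(2R_0)^v/v!<1$ for every integer $v\ge m_{j_0}-m_{i_0}$. Then $\sup_{|z|\le R_0}|\lambda_0^{m_{i_0}} f_{j_0}^{(m_{i_0})}(\lambda_0 z)| < 2^{-(m_{j_0}-m_{i_0}-1)}$. -/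
/-!
Rescaling the variable gives
`c ^ m y⁽ᵐ⁾(c z) = ∑ₖ (c / δ) ^ (k + n) k! / (k + n - m)! β k z ^ (k + n - m)`.
For `0 < c < δ`, `|z| ≤ R` and `v = k + n - m`, the `k`-th term is at most `M ℓ! R ^ v / v!`,
which the smallness hypothesis makes `< 2 ^ (-v) = 2 ^ (-(n - m)) 2 ^ (-k)`; the geometric
series in `k` sums to less than `2`.
-/

open Finset Nat

section ScaledDeriv

variable {𝕜 : Type*} [RCLike 𝕜]

/-- The paper's `T_{m,c}`. -/
noncomputable def scaledDeriv (m : ℕ) (c : 𝕜) (g : 𝕜 → 𝕜) (z : 𝕜) : 𝕜 :=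
  c ^ m * iteratedDeriv m g (c * z)

/-- The polynomial solution `y` of `T_{n,δ}(y) = ∑_{k ≤ ℓ} β k z ^ k`. -/
noncomputable def scaledDerivSolution (n ℓ : ℕ) (δ : 𝕜) (β : ℕ → 𝕜) (z : 𝕜) : 𝕜 :=
  ∑ k ∈ range (ℓ + 1), ((k ! : 𝕜) / ((k + n)! : 𝕜)) * (β k / δ ^ (k + n)) * z ^ (k + n)

theorem iteratedDeriv_sum_mul_pow {ι : Type*} (s : Finset ι) (a : ι → 𝕜) (e : ι → ℕ) (m : ℕ)
    (x : 𝕜) :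
    iteratedDeriv m (fun z => ∑ i ∈ s, a i * z ^ e i) x
      = ∑ i ∈ s, a i * ((e i).descFactorial m * x ^ (e i - m)) := by
  rw [iteratedDeriv_fun_sum fun i _ => by fun_prop]
  simp [iteratedDeriv_const_mul_field]

theorem scaledDeriv_scaledDerivSolution {m n : ℕ} (hmn : m ≤ n) (ℓ : ℕ) (c δ : 𝕜)
    (β : ℕ → 𝕜) (z : 𝕜) :
    scaledDeriv m c (scaledDerivSolution n ℓ δ β) z
      = ∑ k ∈ range (ℓ + 1),
          (c / δ) ^ (k + n) * ((k ! : 𝕜) / ((k + n - m)! : 𝕜)) * β k * z ^ (k + n - m) := by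
  unfold scaledDeriv scaledDerivSolution
  rw [iteratedDeriv_sum_mul_pow, mul_sum]
  refine sum_congr rfl fun k _ => ?_
  obtain ⟨v, hv⟩ : ∃ v, k + n = m + v := ⟨k + n - m, by omega⟩
  have hdesc : ((m + v).descFactorial m : 𝕜) = (m + v)! / v ! := by
    have h := Nat.factorial_mul_descFactorial (Nat.le_add_right m v)
    rw [Nat.add_sub_cancel_left] at h
    rw [eq_div_iff (Nat.cast_ne_zero.mpr (factorial_ne_zero v)), ← Nat.cast_mul, mul_comm, h]
  have hfac : ((m + v)! : 𝕜) ≠ 0 := Nat.cast_ne_zero.mpr (factorial_ne_zero _)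
  rw [hv, Nat.add_sub_cancel_left, hdesc, mul_pow, div_pow, pow_add]
  field_simp
  ring

theorem norm_pow_mul_factorial_div_mul_mul_pow_le {t : 𝕜} (ht : ‖t‖ ≤ 1) {k ℓ : ℕ} (hk : k ≤ ℓ)
    (N v : ℕ) {b z : 𝕜} {M R : ℝ} (hb : ‖b‖ ≤ M) (hz : ‖z‖ ≤ R) :
    ‖t ^ N * ((k ! : 𝕜) / (v ! : 𝕜)) * b * z ^ v‖ ≤ M * ℓ ! * R ^ v / v ! := by
  have hM : 0 ≤ M := (norm_nonneg b).trans hb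
  rw [norm_mul, norm_mul, norm_mul, norm_pow, norm_pow, norm_div, RCLike.norm_natCast,
    RCLike.norm_natCast]
  calc ‖t‖ ^ N * (k ! / v !) * ‖b‖ * ‖z‖ ^ v
      ≤ 1 * (ℓ ! / v !) * M * R ^ v := by
        gcongr
        exact pow_le_one₀ (norm_nonneg t) ht
    _ = M * ℓ ! * R ^ v / v ! := by ring

end ScaledDeriv

theorem norm_sum_range_lt_of_norm_lt_half_pow {E : Type*} [SeminormedAddCommGroup E]
    (g : ℕ → E) (d ℓ : ℕ) (hg : ∀ k ∈ range (ℓ + 1), ‖g k‖ < (1 / 2 : ℝ) ^ (d + k)) :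
    ‖∑ k ∈ range (ℓ + 1), g k‖ < (1 / 2 : ℝ) ^ d * 2 :=
  calc ‖∑ k ∈ range (ℓ + 1), g k‖
      ≤ ∑ k ∈ range (ℓ + 1), ‖g k‖ := norm_sum_le _ _
    _ < ∑ k ∈ range (ℓ + 1), (1 / 2 : ℝ) ^ (d + k) := sum_lt_sum_of_nonempty (by simp) hg
    _ = (1 / 2 : ℝ) ^ d * ∑ k ∈ range (ℓ + 1), (1 / 2 : ℝ) ^ k := by simp only [pow_add, mul_sum]
    _ ≤ (1 / 2 : ℝ) ^ d * 2 := by gcongr; exact sum_geometric_two_le _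

theorem stmt_6 (mi mj : ℕ) (hij : mi < mj)
    (lam₀ δj : ℝ) (hlam₀ : 0 < lam₀) (hlt : lam₀ < δj)
    (R₀ : ℝ)
    (ℓ₀ : ℕ) (β : ℕ → ℂ)
    (M₀ : ℝ) (hM₀ : M₀ = (range (ℓ₀ + 1)).sup' (by simp) (fun j => ‖β j‖))
    (f : ℂ → ℂ)
    (hf : ∀ z : ℂ, f z = ∑ k ∈ range (ℓ₀ + 1),
      ((k.factorial : ℂ) / ((k + mj).factorial : ℂ)) * (β k / (δj : ℂ) ^ (k + mj)) * z ^ (k + mj))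
    (hsmall : ∀ v : ℕ, mj - mi ≤ v → M₀ * (ℓ₀.factorial : ℝ) * (2 * R₀) ^ v / (v.factorial : ℝ) < 1)
    (z : ℂ) (hz : ‖z‖ ≤ R₀) :
    ‖(lam₀ : ℂ) ^ mi * iteratedDeriv mi f ((lam₀ : ℂ) * z)‖
      < (2 : ℝ) ^ (-((mj : ℤ) - (mi : ℤ) - 1)) := by
  have hratio : ‖((lam₀ : ℂ) / δj)‖ ≤ 1 := by
    rw [← Complex.ofReal_div, Complex.norm_real, Real.norm_eq_abs,
      abs_of_pos (div_pos hlam₀ (hlam₀.trans hlt))]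
    exact (div_le_one (hlam₀.trans hlt)).mpr hlt.le
  have hf' : f = scaledDerivSolution mj ℓ₀ (δj : ℂ) β := funext hf
  have hrhs : (2 : ℝ) ^ (-((mj : ℤ) - (mi : ℤ) - 1)) = (1 / 2 : ℝ) ^ (mj - mi) * 2 := by
    rw [← Nat.cast_sub hij.le, neg_sub, zpow_sub₀ two_ne_zero, zpow_one, zpow_natCast, one_div,
      inv_pow]
    ring
  change ‖scaledDeriv mi (lam₀ : ℂ) f z‖ < _
  rw [hrhs, hf', scaledDeriv_scaledDerivSolution hij.le]
  refine norm_sum_range_lt_of_norm_lt_half_pow _ _ _ fun k hk => ?_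
  have hv : mj - mi ≤ k + mj - mi := by omega
  calc _ ≤ M₀ * ℓ₀ ! * R₀ ^ (k + mj - mi) / (k + mj - mi)! :=
        norm_pow_mul_factorial_div_mul_mul_pow_le hratio (Nat.lt_succ_iff.mp (mem_range.mp hk))
          _ _ (hM₀ ▸ le_sup' (fun j => ‖β j‖) hk) hz
    _ = M₀ * ℓ₀ ! * (2 * R₀) ^ (k + mj - mi) / (k + mj - mi)! * (1 / 2) ^ (k + mj - mi) := by
        rw [mul_pow]
        field_simp
        rw [mul_assoc, ← mul_pow]
        norm_num
    _ < 1 * (1 / 2) ^ (k + mj - mi) := by gcongr; exact hsmall _ hv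
    _ = (1 / 2 : ℝ) ^ (mj - mi + k) := by rw [one_mul]; congr 1; omega
end
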